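/- arXiv:2605.05904 — 2 statements merged into one kernel-verified Lean document; each statement's English description precedes it below -/
import Mathlib

section
/- Let ε>0, λ = (−ε+√(ε²+4))/2 (so that λ(ε+λ)=1), γ = N(0,1), φ(z) = −(ε/2)·log(ε/(ε+λ)) − z²/(2(ε+λ)) and ζ(y) = −λy²/2. Then (φ,ζ) solves the Schrödinger system with F = Id: ∫_ℝ exp((yz+φ(z))/ε) γ(dz) = exp(−ζ(y)/ε) for all y∈ℝ, and ∫_ℝ exp((yz+ζ(y))/ε) γ(dy) = exp(−φ(z)/ε) for all z∈ℝ. -/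
open MeasureTheory ProbabilityTheory Real

/-! Both potentials are quadratic, so each equation is a Gaussian integral of the exponential of a
quadratic: `∫ exp (a + c x - b x² / 2) dγ = exp (a + c² / (2 (1 + b)) - log (1 + b) / 2)`.
With `b = λ / ε` in both equations, `1 + b = (ε + λ) / ε`, and the identity `λ (ε + λ) = 1`
(`λ` is the positive root of `x² + ε x - 1`) turns the right-hand sides into `exp (-ζ / ε)` and
`exp (-φ / ε)`. -/

lemma integral_exp_mul_sub_mul_sq {b : ℝ} (hb : 0 < b) (c : ℝ) :
    ∫ x : ℝ, exp (c * x - b * x ^ 2) = √(π / b) * exp (c ^ 2 / (4 * b)) := by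
  have complete_square : ∀ x : ℝ,
      c * x - b * x ^ 2 = -b * (x - c / (2 * b)) ^ 2 + c ^ 2 / (4 * b) := by
    intro x; field_simp; ring
  simp_rw [complete_square, exp_add]
  rw [integral_mul_const,
    integral_sub_right_eq_self (fun x : ℝ => exp (-b * x ^ 2)) (c / (2 * b)), integral_gaussian]

lemma integral_exp_quadratic_gaussianReal {b : ℝ} (hb : -1 < b) (a c : ℝ) :
    ∫ x, exp (a + c * x - b * x ^ 2 / 2) ∂(gaussianReal 0 1)
      = exp (a + c ^ 2 / (2 * (1 + b)) - log (1 + b) / 2) := by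
  have h1b : 0 < 1 + b := by linarith
  have density_mul : ∀ x : ℝ, gaussianPDFReal 0 1 x • exp (a + c * x - b * x ^ 2 / 2)
      = exp a / √(2 * π) * exp (c * x - (1 + b) / 2 * x ^ 2) := by
    intro x
    simp only [gaussianPDFReal, smul_eq_mul, NNReal.coe_one, mul_one, sub_zero]
    rw [mul_assoc, ← exp_add, div_mul_eq_mul_div, ← exp_add, inv_mul_eq_div]
    congr 2
    ring
  simp_rw [integral_gaussianReal_eq_integral_smul one_ne_zero, density_mul]
  rw [integral_const_mul, integral_exp_mul_sub_mul_sq (by linarith) c, exp_sub, exp_add,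
    ← log_sqrt h1b.le, exp_log (sqrt_pos.2 h1b), div_div_eq_mul_div, sqrt_div' _ h1b.le]
  field_simp
  congr 1
  field_simp
  ring

lemma pos_of_eq_neg_add_sqrt {ε lam : ℝ} (hlam : lam = (-ε + √(ε ^ 2 + 4)) / 2) : 0 < lam := by
  have : ε < √(ε ^ 2 + 4) := lt_sqrt_of_sq_lt (by linarith)
  linarith

lemma mul_add_eq_one_of_eq_neg_add_sqrt {ε lam : ℝ} (hlam : lam = (-ε + √(ε ^ 2 + 4)) / 2) :
    lam * (ε + lam) = 1 := by
  have := sq_sqrt (show (0 : ℝ) ≤ ε ^ 2 + 4 by positivity)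
  subst hlam; linear_combination this / 4

/-- The explicit Gaussian pair `(φ, ζ)` solves the Schrödinger system with
`F = Id`, `ε > 0` and both marginals standard normal. -/
theorem gaussian_schrodinger_system_explicit_solution
    (ε : ℝ) (hε : 0 < ε)
    (lam : ℝ) (hlam : lam = (-ε + Real.sqrt (ε ^ 2 + 4)) / 2)
    (φ ζ : ℝ → ℝ)
    (hφ : φ = fun z : ℝ => -(ε / 2) * Real.log (ε / (ε + lam)) - z ^ 2 / (2 * (ε + lam)))
    (hζ : ζ = fun y : ℝ => -(lam * y ^ 2) / 2) :
    (∀ y : ℝ,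
      ∫ z, Real.exp ((y * z + φ z) / ε) ∂(gaussianReal 0 1) = Real.exp (-ζ y / ε)) ∧
    (∀ z : ℝ,
      ∫ y, Real.exp ((y * z + ζ y) / ε) ∂(gaussianReal 0 1) = Real.exp (-φ z / ε)) := by
  have hlam_pos : 0 < lam := pos_of_eq_neg_add_sqrt hlam
  have hlam_mul : lam * (ε + lam) = 1 := mul_add_eq_one_of_eq_neg_add_sqrt hlam
  have hb : -1 < lam / ε := by linarith [div_pos hlam_pos hε]
  have one_add_b : 1 + lam / ε = (ε + lam) / ε := by field_simp
  have log_one_add_b : log (1 + lam / ε) = -log (ε / (ε + lam)) := by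
    rw [one_add_b, ← inv_div, log_inv]
  subst hφ hζ
  refine ⟨fun y => ?_, fun z => ?_⟩
  · calc ∫ z, exp ((y * z + _) / ε) ∂(gaussianReal 0 1)
        = ∫ z, exp (-log (ε / (ε + lam)) / 2 + y / ε * z - lam / ε * z ^ 2 / 2)
            ∂(gaussianReal 0 1) := by
          congr with z
          congr 1
          field_simp
          linear_combination z ^ 2 * hlam_mul
      _ = _ := by
          rw [integral_exp_quadratic_gaussianReal hb, log_one_add_b, one_add_b]
          congr 1
          field_simp
          linear_combination -y ^ 2 * hlam_mul
  · calc ∫ y, exp ((y * z + _) / ε) ∂(gaussianReal 0 1)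
        = ∫ y, exp (0 + z / ε * y - lam / ε * y ^ 2 / 2) ∂(gaussianReal 0 1) := by
          congr with y
          congr 1
          field_simp
          ring
      _ = _ := by
          rw [integral_exp_quadratic_gaussianReal hb, log_one_add_b, one_add_b]
          congr 1
          field_simp
          ring
end

section
/- Let ε>0, λ = (−ε+√(ε²+4))/2, φ(z) = −(ε/2)·log(ε/(ε+λ)) − z²/(2(ε+λ)), ζ(u) = −λu²/2, and for t∈[0,1), y∈ℝ, z∈ℝ define ρ^ε(t,y,z) = ∫_ℝ exp((uz+φ(z)+ζ(u))/ε) (2π(1−t))^{−1/2} exp(−(y−u)²/(2(1−t))) du. Then the logarithmic derivative in y satisfies ρ^ε_y(t,y,z)/ρ^ε(t,y,z) = λ(z − λy)/(1 − tλ²); moreover, as ε→0 one has λ→1, so this drift converges pointwise (for t<1) to the Brownian-bridge drift (z−y)/(1−t) of the classical Kyle equilibrium. -/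
open MeasureTheory Set Filter Topology ProbabilityTheory
open scoped ENNReal NNReal

noncomputable section

/-!
Up to the factor `exp (φ ε z / ε)`, which does not depend on `y`, the insider's density `ρ^ε` is
the heat-kernel smoothing, at time `s = 1 - t`, of the Gaussian weight `u ↦ exp (c u - a u² / 2)`
with `c = z / ε` and `a = λ / ε`. Completing the square shows that this smoothing is again
`y ↦ C exp (q y)` with `q` quadratic, so its logarithmic derivative is the affine function
`(c - a y) / (1 + a s)`. The identity `λ² + ελ = 1` turns this into `λ (z - λ y) / (1 - t λ²)`,
and since `λ` is continuous with `λ 0 = 1`, the drift tends to `(z - y) / (1 - t)`.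
-/

theorem integral_exp_quadratic {b : ℝ} (hb : b < 0) (c d : ℝ) :
    ∫ x : ℝ, Real.exp (b * x ^ 2 + c * x + d)
      = √(Real.pi / -b) * Real.exp (d - c ^ 2 / (4 * b)) := by
  have hb0 := hb.ne
  have hsq : ∀ x : ℝ, b * x ^ 2 + c * x + d
      = -(-b) * (x + c / (2 * b)) ^ 2 + (d - c ^ 2 / (4 * b)) := by
    intro x; field_simp; ring
  simp_rw [hsq, Real.exp_add, integral_mul_const]
  rw [integral_add_right_eq_self (fun x : ℝ => Real.exp (-(-b) * x ^ 2)) (c / (2 * b)),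
    integral_gaussian]

theorem logDeriv_const_mul_exp {f : ℝ → ℝ} {f' y : ℝ} (C : ℝ) (hC : C ≠ 0)
    (hf : HasDerivAt f f' y) : logDeriv (fun x => C * Real.exp (f x)) y = f' := by
  rw [logDeriv_const_mul y C hC, logDeriv_apply, hf.exp.deriv,
    mul_div_cancel_left₀ _ (Real.exp_pos _).ne']

section HeatSmoothing

variable {a s : ℝ} (hs : 0 < s) (has : 0 < 1 + a * s) (c : ℝ)
include hs has

theorem integral_exp_mul_heatKernel (y : ℝ) :
    ∫ u : ℝ, Real.exp (c * u - a * u ^ 2 / 2) * Real.exp (-(y - u) ^ 2 / (2 * s))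
      = √(2 * Real.pi * s / (1 + a * s))
          * Real.exp ((c * s + y) ^ 2 / (2 * s * (1 + a * s)) - y ^ 2 / (2 * s)) := by
  have hb : -(1 + a * s) / (2 * s) < 0 := div_neg_of_neg_of_pos (by linarith) (by linarith)
  have hexp : ∀ u : ℝ, Real.exp (c * u - a * u ^ 2 / 2) * Real.exp (-(y - u) ^ 2 / (2 * s))
      = Real.exp (-(1 + a * s) / (2 * s) * u ^ 2 + (c + y / s) * u + -y ^ 2 / (2 * s)) := by
    intro u
    rw [← Real.exp_add]
    congr 1
    field_simp
    ring
  simp_rw [hexp]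
  rw [integral_exp_quadratic hb]
  congr 2
  · field_simp
  · field_simp
    ring

theorem logDeriv_integral_exp_mul_heatKernel (y : ℝ) :
    logDeriv (fun y' => ∫ u : ℝ,
        Real.exp (c * u - a * u ^ 2 / 2) * Real.exp (-(y' - u) ^ 2 / (2 * s))) y
      = (c - a * y) / (1 + a * s) := by
  have hq : HasDerivAt (fun y' => (c * s + y') ^ 2 / (2 * s * (1 + a * s)) - y' ^ 2 / (2 * s))
      ((c - a * y) / (1 + a * s)) y := by
    refine ((((hasDerivAt_id' y).const_add (c * s)).fun_pow 2).div_const _).fun_sub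
      (((hasDerivAt_id' y).fun_pow 2).div_const _) |>.congr_deriv ?_
    have : 1 + s * a ≠ 0 := by linarith
    norm_num
    field_simp
    ring
  simp_rw [integral_exp_mul_heatKernel hs has c]
  exact logDeriv_const_mul_exp _ (by positivity) hq

end HeatSmoothing

def kyleLambda (ε : ℝ) : ℝ := (-ε + √(ε ^ 2 + 4)) / 2

theorem kyleLambda_pos (ε : ℝ) : 0 < kyleLambda ε := by
  have : ε < √(ε ^ 2 + 4) := Real.lt_sqrt_of_sq_lt (by linarith)
  unfold kyleLambda
  linarith

theorem kyleLambda_sq_add_mul_self (ε : ℝ) : kyleLambda ε ^ 2 + ε * kyleLambda ε = 1 := by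
  unfold kyleLambda
  linear_combination Real.sq_sqrt (by positivity : (0 : ℝ) ≤ ε ^ 2 + 4) / 4

theorem continuous_kyleLambda : Continuous kyleLambda := by
  unfold kyleLambda
  fun_prop

theorem tendsto_kyleLambda_nhdsGT_zero : Tendsto kyleLambda (𝓝[>] 0) (𝓝 1) := by
  have h : kyleLambda 0 = 1 := by norm_num [kyleLambda]
  exact h ▸ continuous_kyleLambda.continuousAt.tendsto.mono_left nhdsWithin_le_nhds

theorem kyleLambda_drift {ε t : ℝ} (hε : 0 < ε) (ht : t < 1) (y z : ℝ) :
    (z / ε - kyleLambda ε / ε * y) / (1 + kyleLambda ε / ε * (1 - t))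
      = kyleLambda ε * (z - kyleLambda ε * y) / (1 - t * kyleLambda ε ^ 2) := by
  have hL := kyleLambda_pos ε
  have hquad := kyleLambda_sq_add_mul_self ε
  have hden : 0 < ε + kyleLambda ε * (1 - t) := by nlinarith
  rw [div_eq_div_iff (by positivity) (by nlinarith)]
  field_simp
  linear_combination (kyleLambda ε * y - z) * hquad

theorem gaussian_kyle_drift_and_limit_general
    (lam : ℝ → ℝ) (hlam : lam = fun ε => (-ε + Real.sqrt (ε ^ 2 + 4)) / 2)
    (φ ζ : ℝ → ℝ → ℝ)
    (hζ : ζ = fun ε u => -(lam ε * u ^ 2) / 2)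
    (ρ : ℝ → ℝ → ℝ → ℝ → ℝ)
    (hρ : ρ = fun ε t y z => ∫ u : ℝ,
        Real.exp ((u * z + φ ε z + ζ ε u) / ε) *
          ((2 * Real.pi * (1 - t)) ^ (-(1:ℝ)/2) * Real.exp (-(y - u) ^ 2 / (2 * (1 - t))))) :
    (∀ ε : ℝ, 0 < ε → ∀ t ∈ Ico (0:ℝ) 1, ∀ y z : ℝ,
      deriv (fun y' => ρ ε t y' z) y / ρ ε t y z
        = lam ε * (z - lam ε * y) / (1 - t * lam ε ^ 2)) ∧
    Tendsto lam (𝓝[>] (0:ℝ)) (𝓝 1) ∧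
    (∀ t ∈ Ico (0:ℝ) 1, ∀ y z : ℝ,
      Tendsto (fun ε => lam ε * (z - lam ε * y) / (1 - t * lam ε ^ 2))
        (𝓝[>] (0:ℝ)) (𝓝 ((z - y) / (1 - t)))) := by
  obtain rfl : lam = kyleLambda := hlam
  subst hζ hρ
  refine ⟨fun ε hε t ht y z => ?_, tendsto_kyleLambda_nhdsGT_zero, fun t ht y z => ?_⟩
  · set L := kyleLambda ε
    have hs : 0 < 1 - t := sub_pos.mpr ht.2
    have hρ_eq : (fun y' => ∫ u : ℝ, Real.exp ((u * z + φ ε z + -(L * u ^ 2) / 2) / ε) *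
          ((2 * Real.pi * (1 - t)) ^ (-(1:ℝ)/2) * Real.exp (-(y' - u) ^ 2 / (2 * (1 - t)))))
        = fun y' => ((2 * Real.pi * (1 - t)) ^ (-(1:ℝ)/2) * Real.exp (φ ε z / ε)) * ∫ u : ℝ,
          Real.exp (z / ε * u - L / ε * u ^ 2 / 2) * Real.exp (-(y' - u) ^ 2 / (2 * (1 - t))) := by
      ext y'
      rw [← integral_const_mul]
      congr 1 with u
      rw [show (u * z + φ ε z + -(L * u ^ 2) / 2) / ε = φ ε z / ε + (z / ε * u - L / ε * u ^ 2 / 2)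
        by ring, Real.exp_add]
      ring
    change logDeriv _ y = _
    rw [hρ_eq, logDeriv_const_mul y _ (by positivity),
      logDeriv_integral_exp_mul_heatKernel hs (by positivity [kyleLambda_pos ε]),
      kyleLambda_drift hε ht.2]
  · have hdrift : ContinuousAt (fun l : ℝ => l * (z - l * y) / (1 - t * l ^ 2)) 1 :=
      ContinuousAt.div (by fun_prop) (by fun_prop) (by simpa using (sub_pos.mpr ht.2).ne')
    simpa [Function.comp_def] using hdrift.tendsto.comp tendsto_kyleLambda_nhdsGT_zero

/-- In the Gaussian Kyle model with quadratic transaction costs and `F = Id`,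
the logarithmic derivative of `ρ^ε` in `y` equals `λ(z − λy)/(1 − tλ²)`; moreover `λ → 1` as
`ε → 0⁺`, so this drift converges pointwise (for `t < 1`) to the Brownian-bridge drift
`(z − y)/(1 − t)` of the classical Kyle equilibrium. -/
theorem gaussian_kyle_drift_and_limit
    (lam : ℝ → ℝ) (hlam : lam = fun ε => (-ε + Real.sqrt (ε ^ 2 + 4)) / 2)
    (φ ζ : ℝ → ℝ → ℝ)
    (hφ : φ = fun ε z => -(ε / 2) * Real.log (ε / (ε + lam ε)) - z ^ 2 / (2 * (ε + lam ε)))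
    (hζ : ζ = fun ε u => -(lam ε * u ^ 2) / 2)
    (ρ : ℝ → ℝ → ℝ → ℝ → ℝ)
    (hρ : ρ = fun ε t y z => ∫ u : ℝ,
        Real.exp ((u * z + φ ε z + ζ ε u) / ε) *
          ((2 * Real.pi * (1 - t)) ^ (-(1:ℝ)/2) * Real.exp (-(y - u) ^ 2 / (2 * (1 - t))))) :
    (∀ ε : ℝ, 0 < ε → ∀ t ∈ Ico (0:ℝ) 1, ∀ y z : ℝ,
      deriv (fun y' => ρ ε t y' z) y / ρ ε t y z
        = lam ε * (z - lam ε * y) / (1 - t * lam ε ^ 2)) ∧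
    Tendsto lam (𝓝[>] (0:ℝ)) (𝓝 1) ∧
    (∀ t ∈ Ico (0:ℝ) 1, ∀ y z : ℝ,
      Tendsto (fun ε => lam ε * (z - lam ε * y) / (1 - t * lam ε ^ 2))
        (𝓝[>] (0:ℝ)) (𝓝 ((z - y) / (1 - t)))) :=
  gaussian_kyle_drift_and_limit_general lam hlam φ ζ hζ ρ hρ

end
end
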